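/- (Fermionic decomposition of the Ising transfer matrix.) Let ε_y ∈ {+1,−1} and define the Ising transfer matrix V = (2 sinh 2K_x)^{N/2} · V_y^{1/2}·V_x^{spin}·V_y^{1/2}, where V_x^{spin} = exp(K*_x ∑_{j=0}^{N−1} C_j) and V_y^{1/2} = exp((K_y/2) ∑_{j=0}^{N−1} s_j s_{j+1}) with the convention s_N = ε_y s_0 (matrix exponentials). Then V = (2 sinh 2K_x)^{N/2} · [ ((1 + ε_y U)/2)·V_a + ((1 − ε_y U)/2)·V_p ]. -/

import Mathlib

open Finset Matrix

noncomputable section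

/-- Pauli matrix σ_x. -/
def pauliX : Matrix (Fin 2) (Fin 2) ℂ := !![0, 1; 1, 0]

/-- Pauli matrix σ_y. -/
def pauliY : Matrix (Fin 2) (Fin 2) ℂ := !![0, -Complex.I; Complex.I, 0]

/-- Pauli matrix σ_z. -/
def pauliZ : Matrix (Fin 2) (Fin 2) ℂ := !![1, 0; 0, -1]

/-- Operators on (ℂ²)^{⊗N} ≅ ℂ^{2^N}, realized as matrices indexed by spin configurations. -/
abbrev SpinOp (N : ℕ) := Matrix (Fin N → Fin 2) (Fin N → Fin 2) ℂ

/-- Tensor product w_0 ⊗ w_1 ⊗ ⋯ ⊗ w_{N−1} of one-site matrices. -/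
def tensorOp {N : ℕ} (w : Fin N → Matrix (Fin 2) (Fin 2) ℂ) : SpinOp N :=
  Matrix.of fun a b => ∏ k : Fin N, w k (a k) (b k)

/-- s_j = 1^{⊗j} ⊗ σ_z ⊗ 1^{⊗(N−1−j)}. -/
def sOp {N : ℕ} (j : Fin N) : SpinOp N :=
  tensorOp fun k => if k = j then pauliZ else 1

/-- C_j = 1^{⊗j} ⊗ σ_x ⊗ 1^{⊗(N−1−j)}. -/
def COp {N : ℕ} (j : Fin N) : SpinOp N :=
  tensorOp fun k => if k = j then pauliX else 1

/-- p_j = σ_x^{⊗j} ⊗ σ_z ⊗ 1^{⊗(N−1−j)}. -/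
def pOp {N : ℕ} (j : Fin N) : SpinOp N :=
  tensorOp fun k => if k < j then pauliX else if k = j then pauliZ else 1

/-- q_j = σ_x^{⊗j} ⊗ σ_y ⊗ 1^{⊗(N−1−j)}. -/
def qOp {N : ℕ} (j : Fin N) : SpinOp N :=
  tensorOp fun k => if k < j then pauliX else if k = j then pauliY else 1

/-- V_x = exp(iK*_x ∑_j p_j q_j) (matrix exponential). -/
def Vx (N : ℕ) (Kxs : ℝ) : SpinOp N :=
  NormedSpace.exp ((Complex.I * (Kxs : ℂ)) • ∑ j : Fin N, pOp j * qOp j)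

/-- p_{j+1}, with the convention p_N = ε·p_0 (ε = −1 for ν = a, ε = +1 for ν = p). -/
def pNext (N : ℕ) [NeZero N] (ε : ℂ) (j : Fin N) : SpinOp N :=
  if (j : ℕ) + 1 = N then ε • pOp (0 : Fin N) else pOp (j + 1)

/-- V_{y,ν}^{1/2} = exp(−(i/2)K_y ∑_j p_{j+1} q_j). -/
def VyHalf (N : ℕ) [NeZero N] (Ky : ℝ) (ε : ℂ) : SpinOp N :=
  NormedSpace.exp ((-(Complex.I / 2) * (Ky : ℂ)) • ∑ j : Fin N, pNext N ε j * qOp j)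

/-- V_ν = V_{y,ν}^{1/2}·V_x·V_{y,ν}^{1/2} (ε = −1 for ν = a, ε = +1 for ν = p). -/
def Vnu (N : ℕ) [NeZero N] (Kxs Ky : ℝ) (ε : ℂ) : SpinOp N :=
  VyHalf N Ky ε * Vx N Kxs * VyHalf N Ky ε

/-- s_{j+1}, with the convention s_N = ε_y·s_0. -/
def sNext (N : ℕ) [NeZero N] (ε : ℂ) (j : Fin N) : SpinOp N :=
  if (j : ℕ) + 1 = N then ε • sOp (0 : Fin N) else sOp (j + 1)

/-- The global spin flip U = C_0·C_1·⋯·C_{N−1}. -/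
def Uflip (N : ℕ) : SpinOp N :=
  ((List.finRange N).map fun j => COp j).prod

/-- V_x^{spin} = exp(K*_x ∑_j C_j). -/
def VxSpin (N : ℕ) (Kxs : ℝ) : SpinOp N :=
  NormedSpace.exp (((Kxs : ℝ) : ℂ) • ∑ j : Fin N, COp j)

/-- V_y^{1/2} = exp((K_y/2) ∑_j s_j s_{j+1}), with s_N = ε_y·s_0. -/
def VySpinHalf (N : ℕ) [NeZero N] (Ky : ℝ) (ε : ℂ) : SpinOp N :=
  NormedSpace.exp (((Ky / 2 : ℝ) : ℂ) • ∑ j : Fin N, sOp j * sNext N ε j)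

/-!
The Jordan–Wigner identities `p_j q_j = -i C_j`, `p_{j+1} q_j = i s_j s_{j+1}` and
`p_0 q_{N-1} = -i U s_{N-1} s_0` show that `V_x` is `V_x^{spin}` and that the fermionic and spin
`y`-exponents share their bulk part, differing only in the boundary bond, which carries an extra
factor `U` on the fermionic side. As `U² = 1` commutes with all exponents, the projector
`(1 + c U)/2` turns that factor `U` into the scalar `c`. Hence `(1 + c U)/2 · V_ν` equals
`V_y^{1/2} V_x^{spin} V_y^{1/2} · (1 + c U)/2` whenever `ε_y = -ε c`, where `ε = ∓1` is the
boundary sign of `ν = a, p`; taking `c = ±ε_y` and summing the two projectors gives the theorem.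
-/

section SpinOperators

variable {N : ℕ}

lemma pauliX_mul_pauliX : pauliX * pauliX = 1 := by
  ext i j; fin_cases i <;> fin_cases j <;> simp [pauliX, Matrix.mul_apply]

lemma pauliZ_mul_pauliZ : pauliZ * pauliZ = 1 := by
  ext i j; fin_cases i <;> fin_cases j <;> simp [pauliZ, Matrix.mul_apply]

lemma pauliZ_mul_pauliY : pauliZ * pauliY = -Complex.I • pauliX := by
  ext i j; fin_cases i <;> fin_cases j <;> simp [pauliZ, pauliY, pauliX, Matrix.mul_apply]

lemma pauliX_mul_pauliY : pauliX * pauliY = Complex.I • pauliZ := by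
  ext i j; fin_cases i <;> fin_cases j <;> simp [pauliZ, pauliY, pauliX, Matrix.mul_apply]

lemma pauliX_mul_pauliZ : pauliX * pauliZ = -Complex.I • pauliY := by
  ext i j; fin_cases i <;> fin_cases j <;> simp [pauliZ, pauliY, pauliX, Matrix.mul_apply]

lemma pauliZ_mul_pauliX : pauliZ * pauliX = Complex.I • pauliY := by
  ext i j; fin_cases i <;> fin_cases j <;> simp [pauliZ, pauliY, pauliX, Matrix.mul_apply]

lemma tensorOp_mul (w v : Fin N → Matrix (Fin 2) (Fin 2) ℂ) :
    tensorOp w * tensorOp v = tensorOp (w * v) := by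
  ext a b
  simp only [tensorOp, Matrix.mul_apply, Matrix.of_apply, Pi.mul_apply]
  rw [Finset.prod_univ_sum, Fintype.piFinset_univ]
  exact Finset.sum_congr rfl fun c _ => Finset.prod_mul_distrib.symm

lemma tensorOp_one : tensorOp (1 : Fin N → Matrix (Fin 2) (Fin 2) ℂ) = 1 := by
  ext a b
  simp [tensorOp, Matrix.one_apply, Finset.prod_boole, funext_iff]

lemma tensorOp_smul (d : Fin N → ℂ) (w : Fin N → Matrix (Fin 2) (Fin 2) ℂ) :
    tensorOp (fun k => d k • w k) = (∏ k, d k) • tensorOp w := by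
  ext a b
  simp [tensorOp, Finset.prod_mul_distrib]

lemma tensorOp_mul_eq_smul {w v u : Fin N → Matrix (Fin 2) (Fin 2) ℂ} {c : ℂ}
    (d : Fin N → ℂ) (h : ∀ k, w k * v k = d k • u k) (hd : ∏ k, d k = c) :
    tensorOp w * tensorOp v = c • tensorOp u := by
  rw [tensorOp_mul, ← hd, ← tensorOp_smul]
  exact congrArg tensorOp (funext h)

lemma tensorOp_commute {w v : Fin N → Matrix (Fin 2) (Fin 2) ℂ}
    (h : ∀ k, Commute (w k) (v k)) :
    Commute (tensorOp w) (tensorOp v) := by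
  rw [commute_iff_eq, tensorOp_mul, tensorOp_mul]
  exact congrArg tensorOp (funext fun k => (h k).eq)

lemma pOp_mul_qOp (j : Fin N) : pOp j * qOp j = -Complex.I • COp j := by
  rw [pOp, qOp, COp]
  refine tensorOp_mul_eq_smul (fun k => if k = j then -Complex.I else 1) (fun k => ?_) (by simp)
  split_ifs <;> simp_all [pauliX_mul_pauliX, pauliZ_mul_pauliY]

lemma pOp_succ_mul_qOp_castSucc {n : ℕ} (j : Fin n) :
    pOp j.succ * qOp j.castSucc = Complex.I • (sOp j.castSucc * sOp j.succ) := by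
  rw [pOp, qOp, sOp, sOp]
  conv_rhs => rw [tensorOp_mul]
  refine tensorOp_mul_eq_smul (fun k => if k = j.castSucc then Complex.I else 1) (fun k => ?_)
    (by simp)
  simp only [Pi.mul_apply, Fin.lt_def, Fin.ext_iff, Fin.val_succ, Fin.val_castSucc]
  split_ifs <;> first | omega | simp [pauliX_mul_pauliX, pauliX_mul_pauliY]

lemma prod_map_COp {l : List (Fin N)} (hl : l.Nodup) :
    (l.map COp).prod = tensorOp fun k => if k ∈ l then pauliX else 1 := by
  induction l with
  | nil => exact tensorOp_one.symm
  | cons j l ih =>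
    rw [List.map_cons, List.prod_cons, ih (List.nodup_cons.mp hl).2, COp, tensorOp_mul]
    congr 1
    funext k
    by_cases hk : k = j
    · simp [hk, (List.nodup_cons.mp hl).1]
    · simp [hk]

lemma Uflip_eq_tensorOp : Uflip N = tensorOp fun _ => pauliX := by
  simp [Uflip, prod_map_COp (List.nodup_finRange N)]

lemma Uflip_mul_Uflip : Uflip N * Uflip N = 1 := by
  rw [Uflip_eq_tensorOp, ← tensorOp_one, ← one_smul ℂ (tensorOp 1)]
  exact tensorOp_mul_eq_smul 1 (fun _ => by simp [pauliX_mul_pauliX]) (by simp)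

lemma Uflip_mul_sOp (j : Fin N) : Uflip N * sOp j = -(sOp j * Uflip N) := by
  rw [Uflip_eq_tensorOp, sOp, ← neg_one_smul ℂ (_ * _)]
  conv_rhs => rw [tensorOp_mul]
  refine tensorOp_mul_eq_smul (fun k => if k = j then -1 else 1) (fun k => ?_) (by simp)
  by_cases hk : k = j <;> simp [hk, pauliX_mul_pauliZ, pauliZ_mul_pauliX]

lemma commute_Uflip_sOp_mul_sOp (i j : Fin N) : Commute (Uflip N) (sOp i * sOp j) := by
  rw [commute_iff_eq, ← mul_assoc, Uflip_mul_sOp, neg_mul, mul_assoc, Uflip_mul_sOp, mul_neg,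
    neg_neg, mul_assoc]

lemma commute_Uflip_COp (j : Fin N) : Commute (Uflip N) (COp j) := by
  rw [Uflip_eq_tensorOp, COp]
  exact tensorOp_commute fun k => by by_cases hk : k = j <;> simp [hk]

lemma pOp_zero_mul_qOp_last {n : ℕ} :
    pOp 0 * qOp (Fin.last n) = -Complex.I • (Uflip (n + 1) * (sOp (Fin.last n) * sOp 0)) := by
  rw [Uflip_eq_tensorOp, pOp, qOp, sOp, sOp]
  conv_rhs => rw [tensorOp_mul, tensorOp_mul]
  refine tensorOp_mul_eq_smul
    (fun k => (if k = 0 then -1 else 1) * (if k = Fin.last n then Complex.I else 1))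
    (fun k => ?_) (by rw [Finset.prod_mul_distrib]; simp)
  simp only [Pi.mul_apply, Fin.lt_def, Fin.ext_iff, Fin.val_zero, Fin.val_last]
  split_ifs <;> first
    | omega
    | simp [pauliX_mul_pauliZ, pauliZ_mul_pauliX, pauliZ_mul_pauliY, pauliZ_mul_pauliZ, smul_smul]

end SpinOperators

lemma Vx_eq_VxSpin (N : ℕ) (Kxs : ℝ) : Vx N Kxs = VxSpin N Kxs := by
  rw [Vx, VxSpin, Finset.sum_congr rfl fun j _ => pOp_mul_qOp j, ← Finset.smul_sum, smul_smul]
  congr 2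
  linear_combination (-Kxs : ℂ) * Complex.I_sq

lemma commute_Uflip_VxSpin (N : ℕ) (Kxs : ℝ) : Commute (Uflip N) (VxSpin N Kxs) :=
  ((Commute.sum_right _ _ _ fun j _ => commute_Uflip_COp j).smul_right _).exp_right

section Bonds

variable {n : ℕ}

def bulkBonds (n : ℕ) : SpinOp (n + 1) := ∑ j : Fin n, sOp j.castSucc * sOp j.succ

def boundaryBond (n : ℕ) : SpinOp (n + 1) := sOp (Fin.last n) * sOp 0

lemma sum_sOp_mul_sNext (ε : ℂ) :
    ∑ j, sOp j * sNext (n + 1) ε j = bulkBonds n + ε • boundaryBond n := by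
  rw [Fin.sum_univ_castSucc, sNext, if_pos (by simp), mul_smul_comm]
  refine congrArg (· + _) (Finset.sum_congr rfl fun j _ => ?_)
  rw [sNext, if_neg (by simpa using j.isLt.ne), Fin.coeSucc_eq_succ]

lemma sum_pNext_mul_qOp (ε : ℂ) :
    ∑ j, pNext (n + 1) ε j * qOp j
      = Complex.I • (bulkBonds n + -ε • (Uflip (n + 1) * boundaryBond n)) := by
  rw [Fin.sum_univ_castSucc, pNext, if_pos (by simp), smul_mul_assoc, pOp_zero_mul_qOp_last,
    bulkBonds, smul_add, Finset.smul_sum, boundaryBond]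
  congr 1
  · refine Finset.sum_congr rfl fun j _ => ?_
    rw [pNext, if_neg (by simpa using j.isLt.ne), Fin.coeSucc_eq_succ, pOp_succ_mul_qOp_castSucc]
  · module

lemma commute_Uflip_bulkBonds : Commute (Uflip (n + 1)) (bulkBonds n) :=
  Commute.sum_right _ _ _ fun _ _ => commute_Uflip_sOp_mul_sOp _ _

lemma commute_Uflip_boundaryBond : Commute (Uflip (n + 1)) (boundaryBond n) :=
  commute_Uflip_sOp_mul_sOp _ _

lemma VySpinHalf_eq (Ky : ℝ) (ε : ℂ) :
    VySpinHalf (n + 1) Ky ε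
      = NormedSpace.exp (((Ky / 2 : ℝ) : ℂ) • (bulkBonds n + ε • boundaryBond n)) := by
  rw [VySpinHalf, sum_sOp_mul_sNext]

lemma VyHalf_eq (Ky : ℝ) (ε : ℂ) :
    VyHalf (n + 1) Ky ε = NormedSpace.exp
      (((Ky / 2 : ℝ) : ℂ) • (bulkBonds n + -ε • (Uflip (n + 1) * boundaryBond n))) := by
  rw [VyHalf, sum_pNext_mul_qOp, smul_smul]
  congr 2
  push_cast
  linear_combination (-Ky / 2 : ℂ) * Complex.I_sq

end Bonds

section Projector

variable {A : Type*} [Ring A] [Algebra ℂ A] {U : A} (c : ℂ)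

lemma inv_two_smul_one_add_smul_mul (hU : U * U = 1) (hc : c * c = 1) :
    (2 : ℂ)⁻¹ • (1 + c • U) * U = c • (2 : ℂ)⁻¹ • (1 + c • U) := by
  rw [smul_mul_assoc, add_mul, one_mul, smul_mul_assoc, hU, smul_comm c, smul_add c, smul_smul c c,
    hc, one_smul, add_comm]

lemma commute_inv_two_smul_one_add_smul {X : A} (h : Commute U X) :
    Commute ((2 : ℂ)⁻¹ • (1 + c • U)) X :=
  ((Commute.one_left X).add_left (h.smul_left c)).smul_left _

lemma inv_two_smul_one_add_smul_add_neg :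
    (2 : ℂ)⁻¹ • (1 + c • U) + (2 : ℂ)⁻¹ • (1 + (-c) • U) = 1 := by
  module

lemma semiconjBy_smul_add_smul_mul {e B S : A} {c : ℂ} (heU : e * U = c • e)
    (hB : Commute e B) (hS : Commute e S) (t : ℂ) {ε η : ℂ} (h : -ε * c = η) :
    SemiconjBy e (t • (S + -ε • (U * B))) (t • (S + η • B)) :=
  calc e * (t • (S + -ε • (U * B))) = t • (e * S + (-ε * c) • (e * B)) := by
        rw [mul_smul_comm, mul_add, mul_smul_comm, ← mul_assoc, heU, smul_mul_assoc, smul_smul]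
    _ = t • (S + η • B) * e := by
        rw [h, hS.eq, hB.eq, smul_mul_assoc, add_mul, smul_mul_assoc]

end Projector

theorem Matrix.semiconjBy_exp {m 𝔸 : Type*} [Fintype m] [DecidableEq m] [NormedRing 𝔸]
    [NormedAlgebra ℚ 𝔸] [CompleteSpace 𝔸] {x a b : Matrix m m 𝔸} (h : SemiconjBy x a b) :
    SemiconjBy x (NormedSpace.exp a) (NormedSpace.exp b) := by
  -- the operator-norm uniformity agrees with the product one only up to unfolding
  have hcomplete : CompleteSpace (Matrix m m 𝔸) := inferInstance
  open scoped Norms.Operator in exact @SemiconjBy.exp_right _ _ _ hcomplete _ _ _ h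

lemma semiconjBy_Vnu {n : ℕ} (Kxs Ky : ℝ) {c ε η : ℂ} (hc : c * c = 1) (h : -ε * c = η) :
    SemiconjBy ((2 : ℂ)⁻¹ • (1 + c • Uflip (n + 1))) (Vnu (n + 1) Kxs Ky ε)
      (VySpinHalf (n + 1) Ky η * VxSpin (n + 1) Kxs * VySpinHalf (n + 1) Ky η) := by
  have hexp := Matrix.semiconjBy_exp <| semiconjBy_smul_add_smul_mul
    (inv_two_smul_one_add_smul_mul c Uflip_mul_Uflip hc)
    (commute_inv_two_smul_one_add_smul c (commute_Uflip_boundaryBond (n := n)))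
    (commute_inv_two_smul_one_add_smul c commute_Uflip_bulkBonds) ((Ky / 2 : ℝ) : ℂ) h
  have hx := commute_inv_two_smul_one_add_smul c (commute_Uflip_VxSpin (n + 1) Kxs)
  rw [Vnu, VyHalf_eq, Vx_eq_VxSpin, VySpinHalf_eq]
  exact (hexp.mul_right hx).mul_right hexp

theorem transfer_matrix_fermionic_decomposition_general
    (N : ℕ) [NeZero N] (Kx Ky Kxs : ℝ)
    (εy : ℝ) (hεy : εy = 1 ∨ εy = -1) :
    (((2 * Real.sinh (2 * Kx)) ^ ((N : ℝ) / 2) : ℝ) : ℂ) •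
        (VySpinHalf N Ky (εy : ℂ) * VxSpin N Kxs * VySpinHalf N Ky (εy : ℂ)) =
      (((2 * Real.sinh (2 * Kx)) ^ ((N : ℝ) / 2) : ℝ) : ℂ) •
        ((2 : ℂ)⁻¹ • ((1 : SpinOp N) + ((εy : ℝ) : ℂ) • Uflip N) * Vnu N Kxs Ky (-1) +
          (2 : ℂ)⁻¹ • ((1 : SpinOp N) - ((εy : ℝ) : ℂ) • Uflip N) * Vnu N Kxs Ky 1) := by
  obtain ⟨n, rfl⟩ : ∃ n, N = n + 1 := Nat.exists_eq_succ_of_ne_zero (NeZero.ne N)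
  have hη : (εy : ℂ) * εy = 1 := by rcases hεy with h | h <;> simp [h]
  have hP := semiconjBy_Vnu (n := n) Kxs Ky (ε := -1) hη (by ring)
  have hQ := semiconjBy_Vnu (n := n) Kxs Ky (c := -εy) (ε := 1)
    (by linear_combination hη) (by ring)
  rw [sub_eq_add_neg, ← neg_smul, hP.eq, hQ.eq, ← mul_add, inv_two_smul_one_add_smul_add_neg,
    mul_one]

/-- Fermionic decomposition of the Ising transfer matrix:
(2 sinh 2K_x)^{N/2}·V_y^{1/2}·V_x^{spin}·V_y^{1/2}
  = (2 sinh 2K_x)^{N/2}·[((1+ε_y U)/2)·V_a + ((1−ε_y U)/2)·V_p]. -/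
theorem transfer_matrix_fermionic_decomposition
    (N : ℕ) [NeZero N] (Kx Ky Kxs : ℝ)
    (hKx : 0 < Kx) (hKy : 0 < Ky)
    (hKxs_pos : 0 < Kxs) (hKxs : Real.tanh Kxs = Real.exp (-(2 * Kx)))
    (εy : ℝ) (hεy : εy = 1 ∨ εy = -1) :
    (((2 * Real.sinh (2 * Kx)) ^ ((N : ℝ) / 2) : ℝ) : ℂ) •
        (VySpinHalf N Ky (εy : ℂ) * VxSpin N Kxs * VySpinHalf N Ky (εy : ℂ)) =
      (((2 * Real.sinh (2 * Kx)) ^ ((N : ℝ) / 2) : ℝ) : ℂ) •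
        ((2 : ℂ)⁻¹ • ((1 : SpinOp N) + ((εy : ℝ) : ℂ) • Uflip N) * Vnu N Kxs Ky (-1) +
          (2 : ℂ)⁻¹ • ((1 : SpinOp N) - ((εy : ℝ) : ℂ) • Uflip N) * Vnu N Kxs Ky 1) :=
  transfer_matrix_fermionic_decomposition_general N Kx Ky Kxs εy hεy
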